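/- arXiv:math/0502379 — 2 statements merged into one kernel-verified Lean document; each statement's English description precedes it below -/
import Mathlib

section
/- For every n ≥ 1, the sum of â(t) over all trees t of degree n in the free magma M equals ω(n). -/
def deg : FreeMagma Unit → ℕ
  | FreeMagma.of _ => 1
  | FreeMagma.mul t₁ t₂ => deg t₁ + deg t₂

def expCoeff : FreeMagma Unit → ℚ
  | FreeMagma.of _ => 1
  | FreeMagma.mul t₁ t₂ =>
      expCoeff t₁ * expCoeff t₂ / (2 ^ (deg (FreeMagma.mul t₁ t₂)) - 2)

/-- Mersenne factorial. -/
def mersenneFact (m : ℕ) : ℕ := ∏ i ∈ Finset.Icc 1 m, (2 ^ i - 1)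

/-- Mersenne binomial coefficient, as a rational number. -/
def mersenneBinom (n r : ℕ) : ℚ :=
  (mersenneFact n : ℚ) / ((mersenneFact r : ℚ) * (mersenneFact (n - r) : ℚ))

def omegaQ (n : ℕ) : ℚ := 2 ^ (n - 1) * (mersenneFact (n - 1) : ℚ) / (n.factorial : ℚ)

/-- `â(t) = n! · ω(n) · a(t)` where `n = deg t`. -/
def ahat (t : FreeMagma Unit) : ℚ :=
  ((deg t).factorial : ℚ) * omegaQ (deg t) * expCoeff t

/-!
Splitting a tree of degree `n ≥ 2` at its root, the sums `S n = ∑_{deg t = n} a(t)` satisfy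
`(2^n - 2) S n = ∑_{i + j = n, i, j ≥ 1} S i S j`. Since `∑_{i + j = n} 1 / (i! j!) = 2^n / n!`,
with the two terms `i = 0` and `j = 0` contributing `2 / n!`, the sequence `S n = 1 / n!` solves
this recursion. Hence `∑ â(t) = n! ω(n) S n = ω(n)`.
-/
open Finset Nat

lemma FreeMagma.mul_eq_mul_iff {α : Type*} {a b c d : FreeMagma α} :
    a * b = c * d ↔ a = c ∧ b = d :=
  ⟨fun h => by injection h with h₁ h₂; exact ⟨h₁, h₂⟩, by rintro ⟨rfl, rfl⟩; rfl⟩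

lemma deg_eq_length (t : FreeMagma Unit) : deg t = t.length := by
  induction t with
  | ih1 => rfl
  | ih2 a b ha hb => simp [deg, ha, hb]

lemma deg_mul (a b : FreeMagma Unit) : deg (a * b) = deg a + deg b := rfl

lemma expCoeff_mul (a b : FreeMagma Unit) :
    expCoeff (a * b) = expCoeff a * expCoeff b / (2 ^ (deg a + deg b) - 2) := rfl

def trees : ℕ → Finset (FreeMagma Unit)
  | 0 => ∅
  | 1 => {FreeMagma.of ()}
  | n + 2 => (antidiagonal n).attach.biUnion fun p =>
      (trees (p.1.1 + 1) ×ˢ trees (p.1.2 + 1)).image fun ab => ab.1 * ab.2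
  decreasing_by all_goals (have := HasAntidiagonal.mem_antidiagonal.mp p.2; omega)

lemma mem_trees {n : ℕ} {t : FreeMagma Unit} : t ∈ trees n ↔ deg t = n := by
  induction t generalizing n with
  | ih1 => rcases n with _ | _ | n <;> simp [trees, deg]
  | ih2 a b iha ihb =>
    have ha := deg_eq_length a ▸ a.length_pos
    have hb := deg_eq_length b ▸ b.length_pos
    rcases n with _ | _ | n
    · simp only [trees, notMem_empty, deg_mul, false_iff]
      omega
    · simp only [zero_add, trees, mem_singleton, reduceCtorEq, deg_mul, false_iff]
      omega
    · simp only [trees, mem_biUnion, mem_attach, mem_image, mem_product, Prod.exists,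
        FreeMagma.mul_eq_mul_iff, exists_eq_right_right, exists_eq_right, iha, ihb, true_and,
        Subtype.exists, HasAntidiagonal.mem_antidiagonal, exists_and_left, exists_prop, deg_mul]
      constructor
      · rintro ⟨i, hi, j, rfl, hj⟩
        omega
      · intro h
        exact ⟨deg a - 1, by omega, deg b - 1, by omega, by omega⟩

lemma sum_trees_add_two {M : Type*} [AddCommMonoid M] (f : FreeMagma Unit → M) (n : ℕ) :
    ∑ t ∈ trees (n + 2), f t =
      ∑ p ∈ antidiagonal n, ∑ a ∈ trees (p.1 + 1), ∑ b ∈ trees (p.2 + 1), f (a * b) := by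
  rw [trees, sum_biUnion, ← sum_attach (antidiagonal n)]
  · refine sum_congr rfl fun p _ => ?_
    rw [sum_image, sum_product]
    intro x _ y _ h
    exact Prod.ext_iff.mpr (FreeMagma.mul_eq_mul_iff.mp h)
  · intro p _ q _ hpq
    simp only [Function.onFun, disjoint_left, mem_image, mem_product, Prod.exists, mem_trees]
    rintro t ⟨x₁, x₂, ⟨hx, -⟩, rfl⟩ ⟨y₁, y₂, ⟨hy, -⟩, hxy⟩
    obtain ⟨rfl, -⟩ := FreeMagma.mul_eq_mul_iff.mp hxy
    have hp := HasAntidiagonal.mem_antidiagonal.mp p.2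
    have hq := HasAntidiagonal.mem_antidiagonal.mp q.2
    exact hpq (Subtype.ext (Prod.ext (by omega) (by omega)))

lemma sum_antidiagonal_inv_factorial_mul {K : Type*} [Field K] [CharZero K] (n : ℕ) :
    ∑ p ∈ antidiagonal n, ((p.1 ! : K) * p.2 !)⁻¹ = 2 ^ n / n ! := by
  have hterm : ∀ p ∈ antidiagonal n, ((p.1 ! : K) * p.2 !)⁻¹ = (n.choose p.1 : K) / n ! := by
    rintro ⟨i, j⟩ h
    rw [HasAntidiagonal.mem_antidiagonal] at h
    subst h
    rw [Nat.cast_add_choose, div_div_cancel_left' (Nat.cast_ne_zero.mpr (factorial_ne_zero _))]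
  rw [sum_congr rfl hterm, ← sum_div]
  have hbinom := (Commute.one_left (1 : K)).add_pow' n
  simp only [one_pow, mul_one, nsmul_eq_mul, one_add_one_eq_two] at hbinom
  rw [hbinom]

lemma sum_antidiagonal_inv_factorial_succ_mul {K : Type*} [Field K] [CharZero K] (n : ℕ) :
    ∑ p ∈ antidiagonal n, (((p.1 + 1)! : K) * (p.2 + 1)!)⁻¹ = (2 ^ (n + 2) - 2) / (n + 2)! := by
  have h := sum_antidiagonal_inv_factorial_mul (K := K) (n + 2)
  rw [Nat.sum_antidiagonal_succ, Nat.sum_antidiagonal_succ'] at h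
  simp only [factorial_zero, cast_one, one_mul, mul_one] at h
  rw [sub_div, ← h]
  ring

lemma sum_expCoeff_trees {n : ℕ} (hn : n ≠ 0) : ∑ t ∈ trees n, expCoeff t = (n ! : ℚ)⁻¹ := by
  induction n using Nat.strong_induction_on with
  | _ n ih =>
  match n, hn with
  | 1, _ => simp [trees, expCoeff]
  | n + 2, _ =>
    have hc : (2 : ℚ) ^ (n + 2) - 2 ≠ 0 := by
      have : (2 : ℚ) ^ 2 ≤ 2 ^ (n + 2) := pow_le_pow_right₀ one_le_two (by omega)
      linarith
    calc ∑ t ∈ trees (n + 2), expCoeff t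
        = ∑ p ∈ antidiagonal n, (∑ a ∈ trees (p.1 + 1), expCoeff a) *
            (∑ b ∈ trees (p.2 + 1), expCoeff b) / (2 ^ (n + 2) - 2) := by
          rw [sum_trees_add_two]
          refine sum_congr rfl fun p hp => ?_
          rw [sum_mul_sum, sum_div]
          refine sum_congr rfl fun a ha => ?_
          rw [sum_div]
          refine sum_congr rfl fun b hb => ?_
          rw [expCoeff_mul, mem_trees.mp ha, mem_trees.mp hb,
            ← HasAntidiagonal.mem_antidiagonal.mp hp]
          ring
      _ = (∑ p ∈ antidiagonal n, (((p.1 + 1)! : ℚ) * (p.2 + 1)!)⁻¹) / (2 ^ (n + 2) - 2) := by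
          rw [sum_div]
          refine sum_congr rfl fun p hp => ?_
          have := HasAntidiagonal.mem_antidiagonal.mp hp
          rw [ih (p.1 + 1) (by omega) (succ_ne_zero _), ih (p.2 + 1) (by omega) (succ_ne_zero _),
            mul_inv]
      _ = ((n + 2)! : ℚ)⁻¹ := by
          rw [sum_antidiagonal_inv_factorial_succ_mul, div_div_cancel_left' hc]

theorem sum_ahat_eq_omega (n : ℕ) (hn : 1 ≤ n) :
    ∑ᶠ t ∈ {t : FreeMagma Unit | deg t = n}, ahat t = omegaQ n := by
  have hset : {t : FreeMagma Unit | deg t = n} = trees n := by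
    ext t
    exact mem_trees.symm
  rw [hset, finsum_mem_coe_finset]
  calc ∑ t ∈ trees n, ahat t = (n ! : ℚ) * omegaQ n * ∑ t ∈ trees n, expCoeff t := by
        rw [mul_sum]
        exact sum_congr rfl fun t ht => by rw [ahat, mem_trees.mp ht]
    _ = omegaQ n := by
        rw [sum_expCoeff_trees (by omega)]
        field_simp
end

section
/- For every n ≥ 2, ω(n) = Σ_{k=1}^{n-1} (n-2 choose k-1)_M · ω(k) · ω(n-k), where (m choose r)_M is the Mersenne binomial and ω(n) = 2^{n-1}·∏_{i=1}^{n-1}(2^i - 1)/n!. -/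
lemma mersenneFact_pos (m : ℕ) : 0 < mersenneFact m := by
  unfold mersenneFact
  apply Finset.prod_pos
  intro i hi
  have h1 : 1 ≤ i := (Finset.mem_Icc.mp hi).1
  have h2 : 2 ≤ 2 ^ i := by
    calc (2:ℕ) = 2 ^ 1 := rfl
      _ ≤ 2 ^ i := Nat.pow_le_pow_right (by norm_num) h1
  omega

lemma mersenneFact_succ (m : ℕ) :
    mersenneFact (m + 1) = mersenneFact m * (2 ^ (m + 1) - 1) := by
  unfold mersenneFact
  rw [← Finset.prod_Icc_succ_top (by omega : 1 ≤ m + 1)]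

theorem omega_recursion (n : ℕ) (hn : 2 ≤ n) :
    omegaQ n = ∑ k ∈ Finset.Icc 1 (n - 1),
      mersenneBinom (n - 2) (k - 1) * omegaQ k * omegaQ (n - k) := by
  obtain ⟨m, rfl⟩ : ∃ m, n = m + 2 := ⟨n - 2, by omega⟩
  have hfac : ∀ j : ℕ, ((j.factorial : ℚ)) ≠ 0 :=
    fun j => Nat.cast_ne_zero.mpr j.factorial_ne_zero
  have hmf : ∀ j : ℕ, ((mersenneFact j : ℚ)) ≠ 0 :=
    fun j => Nat.cast_ne_zero.mpr (mersenneFact_pos j).ne'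
  have hn1 : m + 2 - 1 = m + 1 := by omega
  have hn2 : m + 2 - 2 = m := by omega
  rw [hn1, hn2]
  have hsum : ∑ k ∈ Finset.Icc 1 (m + 1), (((m + 2).choose k : ℚ)) =
      2 ^ (m + 2) - 2 := by
    have h1 : ∑ k ∈ Finset.range (m + 3), (m + 2).choose k = 2 ^ (m + 2) :=
      Nat.sum_range_choose (m + 2)
    have h2 : Finset.range (m + 3) = insert 0 (insert (m + 2) (Finset.Icc 1 (m + 1))) := by
      ext x
      simp only [Finset.mem_range, Finset.mem_insert, Finset.mem_Icc]
      omega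
    rw [h2, Finset.sum_insert (by simp [Finset.mem_Icc]),
      Finset.sum_insert (by simp [Finset.mem_Icc])] at h1
    simp only [Nat.choose_zero_right, Nat.choose_self] at h1
    have h3 : ∑ k ∈ Finset.Icc 1 (m + 1), (m + 2).choose k = 2 ^ (m + 2) - 2 := by omega
    have h4 : (2:ℕ) ≤ 2 ^ (m + 2) := by
      calc (2:ℕ) = 2 ^ 1 := rfl
        _ ≤ 2 ^ (m + 2) := Nat.pow_le_pow_right (by norm_num) (by omega)
    calc ∑ k ∈ Finset.Icc 1 (m + 1), (((m + 2).choose k : ℚ))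
        = (((∑ k ∈ Finset.Icc 1 (m + 1), (m + 2).choose k : ℕ)) : ℚ) := by push_cast; rfl
      _ = (((2 ^ (m + 2) - 2 : ℕ)) : ℚ) := by rw [h3]
      _ = 2 ^ (m + 2) - 2 := by rw [Nat.cast_sub h4]; push_cast; ring
  have hterm : ∀ k ∈ Finset.Icc 1 (m + 1),
      mersenneBinom m (k - 1) * omegaQ k * omegaQ (m + 2 - k) =
        2 ^ m * (mersenneFact m : ℚ) / ((m + 2).factorial : ℚ) * ((m + 2).choose k : ℚ) := by
    intro k hk
    simp only [Finset.mem_Icc] at hk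
    obtain ⟨j, rfl⟩ : ∃ j, k = j + 1 := ⟨k - 1, by omega⟩
    have hj : j ≤ m := by omega
    have h1 : m + 2 - (j + 1) = (m - j) + 1 := by omega
    have h2 : j + 1 - 1 = j := by omega
    have h3 : m - j + 1 - 1 = m - j := by omega
    unfold mersenneBinom omegaQ
    rw [h1, h2, h3]
    have hch : (((m + 2).choose (j + 1)) : ℚ) =
        ((m + 2).factorial : ℚ) / (((j + 1).factorial : ℚ) * (((m - j) + 1).factorial : ℚ)) := by
      rw [Nat.cast_choose ℚ (by omega : j + 1 ≤ m + 2), h1]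
    rw [hch]
    have hpow : (2:ℚ) ^ j * 2 ^ (m - j) = 2 ^ m := by
      rw [← pow_add]
      congr 1
      omega
    have ha := hmf j
    have hb := hmf (m - j)
    have hc := hfac (j + 1)
    have hd := hfac ((m - j) + 1)
    have he := hfac (m + 2)
    field_simp
    rw [← hpow]
    ring
  rw [Finset.sum_congr rfl hterm, ← Finset.mul_sum, hsum]
  unfold omegaQ
  rw [hn1, mersenneFact_succ m]
  have hcast : ((mersenneFact m * (2 ^ (m + 1) - 1) : ℕ) : ℚ) =
      (mersenneFact m : ℚ) * (2 ^ (m + 1) - 1) := by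
    have : (1:ℕ) ≤ 2 ^ (m + 1) := Nat.one_le_two_pow
    push_cast [Nat.cast_sub this]
    ring
  rw [hcast]
  field_simp
  ring
end
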